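/- Let ≽ be a preorder on Δ satisfying Pareto, Independence, Unidimensional Expectations, and Negative Dominance. Then there are no real numbers a, b > 0 such that δ_(a,−b/2) ⋈ δ_(0,0) and δ_(−a/2,b) ⋈ δ_(0,0); equivalently, these five conditions are jointly inconsistent. -/
import Mathlib


open scoped BigOperators

noncomputable section

/-- A finite-support lottery on `X`. -/
structure Lottery (X : Type*) where
  val : X →₀ ℝ
  nonneg : ∀ x, 0 ≤ val x
  total : val.sum (fun _ p => p) = 1

namespace Lottery

variable {X : Type*}

/-- The point-mass lottery at `x`. -/
def delta (x : X) : Lottery X where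
  val := Finsupp.single x 1
  nonneg := fun y => by
    classical
    rw [Finsupp.single_apply]
    split <;> norm_num
  total := by
    rw [Finsupp.sum_single_index rfl]

/-- The mixture `α • f + (1 - α) • g`. -/
def mix (α : ℝ) (h1 : 0 ≤ α) (h2 : α ≤ 1) (f g : Lottery X) : Lottery X where
  val := α • f.val + (1 - α) • g.val
  nonneg := fun x => by
    have hf := f.nonneg x
    have hg := g.nonneg x
    simp only [Finsupp.coe_add, Finsupp.coe_smul, Pi.add_apply, Pi.smul_apply, smul_eq_mul]
    nlinarith
  total := by
    rw [Finsupp.sum_add_index' (fun _ => rfl) (fun _ _ _ => rfl)]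
    rw [Finsupp.sum_smul_index (fun _ => rfl), Finsupp.sum_smul_index (fun _ => rfl)]
    rw [← Finsupp.mul_sum, ← Finsupp.mul_sum, f.total, g.total]
    ring

/-- The uniform lottery on `a` and `b`, written `a/b` in the paper. -/
def unif (a b : X) : Lottery X := mix (1/2) (by norm_num) (by norm_num) (delta a) (delta b)

/-- Strict preference. -/
def SPref (R : Lottery X → Lottery X → Prop) (f g : Lottery X) : Prop := R f g ∧ ¬ R g f

/-- Indifference. -/
def Indiff (R : Lottery X → Lottery X → Prop) (f g : Lottery X) : Prop := R f g ∧ R g f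

/-- Incomparability. -/
def Incomp (R : Lottery X → Lottery X → Prop) (f g : Lottery X) : Prop := ¬ R f g ∧ ¬ R g f

/-- Negative Dominance. -/
def NegDominance (R : Lottery X → Lottery X → Prop) : Prop :=
  ∀ f g : Lottery X, SPref R f g →
    ∃ o ∈ f.val.support, ∃ o' ∈ g.val.support, SPref R (delta o) (delta o')

/-- Independence. -/
def Independence (R : Lottery X → Lottery X → Prop) : Prop :=
  ∀ f g h : Lottery X, ∀ α : ℝ, ∀ (h1 : 0 < α) (h2 : α < 1),
    (R f g ↔ R (mix α h1.le h2.le f h) (mix α h1.le h2.le g h))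

/-- The coordinatewise expectation of a lottery on `ℝ²`. -/
def expLot (f : Lottery (ℝ × ℝ)) : ℝ × ℝ :=
  (f.val.sum fun o p => p * o.1, f.val.sum fun o p => p * o.2)

/-- Pareto. -/
def Pareto (R : Lottery (ℝ × ℝ) → Lottery (ℝ × ℝ) → Prop) : Prop :=
  ∀ x y x' y' : ℝ, x' ≤ x → y' ≤ y → R (delta (x, y)) (delta (x', y'))

/-- Converse Pareto. -/
def ConvPareto (R : Lottery (ℝ × ℝ) → Lottery (ℝ × ℝ) → Prop) : Prop :=
  ∀ x y x' y' : ℝ, R (delta (x, y)) (delta (x', y')) → x' ≤ x ∧ y' ≤ y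

/-- Two outcomes are unidimensional with each other if they differ in at most one coordinate. -/
def UniWith {A B : Type*} (o o' : A × B) : Prop := o.1 = o'.1 ∨ o.2 = o'.2

/-- A lottery is unidimensional if any two outcomes in its support are unidimensional
with each other. -/
def Unidim {A B : Type*} (f : Lottery (A × B)) : Prop :=
  ∀ o ∈ f.val.support, ∀ o' ∈ f.val.support, UniWith o o'

/-- Expectationalism. -/
def Expectationalism (R : Lottery (ℝ × ℝ) → Lottery (ℝ × ℝ) → Prop) : Prop :=
  ∀ f, Indiff R f (delta (expLot f))

/-- Unidimensional Expectations. -/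
def UnidimExp (R : Lottery (ℝ × ℝ) → Lottery (ℝ × ℝ) → Prop) : Prop :=
  ∀ f, Unidim f → Indiff R f (delta (expLot f))

end Lottery

open Lottery

namespace Lottery

variable {X : Type*}

lemma lot_ext {f g : Lottery X} (h : f.val = g.val) : f = g := by
  cases f; cases g; cases h; rfl

lemma lot_eq {f g : Lottery X} (h : ∀ x, f.val x = g.val x) : f = g :=
  lot_ext (Finsupp.ext h)

lemma mix_delta_val (α : ℝ) (h1 : 0 ≤ α) (h2 : α ≤ 1) (p q : X) :
    (mix α h1 h2 (delta p) (delta q)).val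
      = Finsupp.single p α + Finsupp.single q (1 - α) := by
  classical
  simp [mix, delta, Finsupp.smul_single']

lemma expLot_mix_delta (α : ℝ) (h1 : 0 ≤ α) (h2 : α ≤ 1) (p q : ℝ × ℝ) :
    expLot (mix α h1 h2 (delta p) (delta q)) =
      (α * p.1 + (1 - α) * q.1, α * p.2 + (1 - α) * q.2) := by
  unfold expLot
  rw [mix_delta_val]
  rw [Finsupp.sum_add_index' (h := fun (o : ℝ × ℝ) (r : ℝ) => r * o.1)
        (fun _ => zero_mul _) (fun _ _ _ => add_mul _ _ _),
      Finsupp.sum_add_index' (h := fun (o : ℝ × ℝ) (r : ℝ) => r * o.2)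
        (fun _ => zero_mul _) (fun _ _ _ => add_mul _ _ _),
      Finsupp.sum_single_index (h := fun (o : ℝ × ℝ) (r : ℝ) => r * o.1) (zero_mul _),
      Finsupp.sum_single_index (h := fun (o : ℝ × ℝ) (r : ℝ) => r * o.1) (zero_mul _),
      Finsupp.sum_single_index (h := fun (o : ℝ × ℝ) (r : ℝ) => r * o.2) (zero_mul _),
      Finsupp.sum_single_index (h := fun (o : ℝ × ℝ) (r : ℝ) => r * o.2) (zero_mul _)]

lemma unidim_mix_delta (α : ℝ) (h1 : 0 ≤ α) (h2 : α ≤ 1) {p q : ℝ × ℝ}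
    (hpq : UniWith p q) : Unidim (mix α h1 h2 (delta p) (delta q)) := by
  classical
  have hs : (mix α h1 h2 (delta p) (delta q)).val.support ⊆ {p, q} := by
    rw [mix_delta_val]
    intro x hx
    rcases Finset.mem_union.mp (Finsupp.support_add hx) with h | h
    · exact Finset.mem_insert.mpr
        (Or.inl (Finset.mem_singleton.mp (Finsupp.support_single_subset h)))
    · exact Finset.mem_insert.mpr (Or.inr (Finsupp.support_single_subset h))
  intro o ho o' ho'
  rcases Finset.mem_insert.mp (hs ho) with rfl | h
  · rcases Finset.mem_insert.mp (hs ho') with rfl | h'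
    · exact Or.inl rfl
    · have h2 := Finset.mem_singleton.mp h'; subst h2; exact hpq
  · have h2 := Finset.mem_singleton.mp h; subst h2
    rcases Finset.mem_insert.mp (hs ho') with rfl | h'
    · exact hpq.imp Eq.symm Eq.symm
    · have h3 := Finset.mem_singleton.mp h'; subst h3; exact Or.inl rfl

end Lottery

/-- If a preorder on Δ satisfies Pareto, Independence, Unidimensional
Expectations, and Negative Dominance, then there are no `a, b > 0` with
`δ_(a,−b/2) ⋈ δ_(0,0)` and `δ_(−a/2,b) ⋈ δ_(0,0)`. -/
theorem statement2 (R : Lottery (ℝ × ℝ) → Lottery (ℝ × ℝ) → Prop)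
    (hrefl : Reflexive R) (htrans : Transitive R)
    (hP : Pareto R) (hInd : Independence R) (hUE : UnidimExp R) (hND : NegDominance R) :
    ¬ ∃ a b : ℝ, 0 < a ∧ 0 < b ∧
      Incomp R (delta (a, -b/2)) (delta (0, 0)) ∧
      Incomp R (delta (-a/2, b)) (delta (0, 0)) := by
  rintro ⟨a, b, ha, hb, hA, hB⟩
  classical
  -- congruence helper
  have Rc : ∀ {f f' g g' : Lottery (ℝ × ℝ)}, f = f' → g = g' → R f g → R f' g' := by
    rintro f f' g g' rfl rfl h; exact h
  -- unidimensional expectation for two-point lotteries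
  have uei : ∀ (α : ℝ) (h1 : 0 ≤ α) (h2 : α ≤ 1) (p1 p2 q1 q2 : ℝ),
      UniWith (p1, p2) (q1, q2) →
      Indiff R (mix α h1 h2 (delta (p1, p2)) (delta (q1, q2)))
        (delta (α * p1 + (1 - α) * q1, α * p2 + (1 - α) * q2)) := by
    intro α h1 h2 p1 p2 q1 q2 hpq
    have h := hUE _ (unidim_mix_delta α h1 h2 hpq)
    rw [expLot_mix_delta] at h
    exact h
  -- Step 1: δ(a,-b/2) ∼ ½δ(a,b) + ½δ(a,-2b)
  have hu1 := uei (1/2) (by norm_num) (by norm_num) a b a (-2*b) (Or.inl rfl)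
  have e1 : ((1/2 : ℝ) * a + (1 - 1/2) * a, (1/2 : ℝ) * b + (1 - 1/2) * (-2*b))
      = (a, -b/2) := by
    simp only [Prod.mk.injEq]; exact ⟨by ring, by ring⟩
  rw [e1] at hu1
  -- Step 2 : t ≼≽ ½u + ½δ(-a/2,b)  (Independence)
  have h2 : R (mix (1/2 : ℝ) (by norm_num) (by norm_num) (delta (a, -b/2)) (delta (-a/2, b)))
      (mix (1/2 : ℝ) (by norm_num) (by norm_num)
        (mix (1/2 : ℝ) (by norm_num) (by norm_num) (delta (a, b)) (delta (a, -2*b)))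
        (delta (-a/2, b))) :=
    (hInd (delta (a, -b/2))
      (mix (1/2 : ℝ) (by norm_num) (by norm_num) (delta (a, b)) (delta (a, -2*b)))
      (delta (-a/2, b)) (1/2) (by norm_num) (by norm_num)).1 hu1.2
  -- Step 3: w₃ := ⅓δ(a,b)+⅔δ(-a/2,b) ∼ δ(0,b)
  have hw3 := uei (1/3) (by norm_num) (by norm_num) a b (-a/2) b (Or.inr rfl)
  have e2 : ((1/3 : ℝ) * a + (1 - 1/3) * (-a/2), (1/3 : ℝ) * b + (1 - 1/3) * b)
      = ((0 : ℝ), b) := by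
    simp only [Prod.mk.injEq]; exact ⟨by ring, by ring⟩
  rw [e2] at hw3
  have h3 : R (mix (3/4 : ℝ) (by norm_num) (by norm_num)
        (mix (1/3 : ℝ) (by norm_num) (by norm_num) (delta (a, b)) (delta (-a/2, b)))
        (delta (a, -2*b)))
      (mix (3/4 : ℝ) (by norm_num) (by norm_num) (delta ((0 : ℝ), b)) (delta (a, -2*b))) :=
    (hInd _ _ (delta (a, -2*b)) (3/4) (by norm_num) (by norm_num)).1 hw3.1
  -- Step 4: Pareto step δ(a,-2b) ≽ δ(0,-2b), mixed with δ(0,b)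
  have h4 : R (mix (1/4 : ℝ) (by norm_num) (by norm_num) (delta (a, -2*b)) (delta ((0 : ℝ), b)))
      (mix (1/4 : ℝ) (by norm_num) (by norm_num) (delta ((0 : ℝ), -2*b)) (delta ((0 : ℝ), b))) :=
    (hInd _ _ (delta ((0 : ℝ), b)) (1/4) (by norm_num) (by norm_num)).1
      (hP a (-2*b) 0 (-2*b) ha.le le_rfl)
  -- Step 5: ¼δ(0,-2b)+¾δ(0,b) ∼ δ(0,b/4)
  have ht3 := uei (1/4) (by norm_num) (by norm_num) 0 (-2*b) 0 b (Or.inl rfl)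
  have e3 : ((1/4 : ℝ) * 0 + (1 - 1/4) * 0, (1/4 : ℝ) * (-2*b) + (1 - 1/4) * b)
      = ((0 : ℝ), b/4) := by
    simp only [Prod.mk.injEq]; exact ⟨by ring, by ring⟩
  rw [e3] at ht3
  -- lottery identities
  have hEq1 : mix (1/2 : ℝ) (by norm_num) (by norm_num)
        (mix (1/2 : ℝ) (by norm_num) (by norm_num) (delta (a, b)) (delta (a, -2*b)))
        (delta (-a/2, b))
      = mix (3/4 : ℝ) (by norm_num) (by norm_num)
        (mix (1/3 : ℝ) (by norm_num) (by norm_num) (delta (a, b)) (delta (-a/2, b)))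
        (delta (a, -2*b)) := by
    apply lot_eq
    intro x
    simp [mix, delta, Finsupp.single_apply]
    split_ifs <;> ring
  have hEq2 : mix (3/4 : ℝ) (by norm_num) (by norm_num) (delta ((0 : ℝ), b)) (delta (a, -2*b))
      = mix (1/4 : ℝ) (by norm_num) (by norm_num) (delta (a, -2*b)) (delta ((0 : ℝ), b)) := by
    apply lot_eq
    intro x
    simp [mix, delta, Finsupp.single_apply]
    split_ifs <;> ring
  -- R t δ(0, b/4)
  have htb4 : R (mix (1/2 : ℝ) (by norm_num) (by norm_num)
        (delta (a, -b/2)) (delta (-a/2, b))) (delta ((0 : ℝ), b/4)) := by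
    refine htrans (htrans (htrans h2 ?_) h4) ht3.1
    exact Rc hEq1.symm hEq2 h3
  -- R t δ(0,0)
  have htO : R (mix (1/2 : ℝ) (by norm_num) (by norm_num)
        (delta (a, -b/2)) (delta (-a/2, b))) (delta ((0 : ℝ), (0 : ℝ))) :=
    htrans htb4 (hP 0 (b/4) 0 0 le_rfl (by linarith))
  by_cases hOt : R (delta ((0 : ℝ), (0 : ℝ)))
      (mix (1/2 : ℝ) (by norm_num) (by norm_num) (delta (a, -b/2)) (delta (-a/2, b)))
  · -- explosion: R δ(0,0) δ(0,b/4) leads to contradiction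
    have hOb4 : R (delta ((0 : ℝ), (0 : ℝ))) (delta ((0 : ℝ), b/4)) := htrans hOt htb4
    have step : ∀ w : ℝ, R (delta ((0 : ℝ), w)) (delta ((0 : ℝ), w + b/8)) := by
      intro w
      have hM1 := uei (1/2) (by norm_num) (by norm_num) 0 0 0 (2*w) (Or.inl rfl)
      have eM1 : ((1/2 : ℝ) * 0 + (1 - 1/2) * 0, (1/2 : ℝ) * 0 + (1 - 1/2) * (2*w))
          = ((0 : ℝ), w) := by
        simp only [Prod.mk.injEq]; exact ⟨by ring, by ring⟩
      rw [eM1] at hM1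
      have hM2 := uei (1/2) (by norm_num) (by norm_num) 0 (b/4) 0 (2*w) (Or.inl rfl)
      have eM2 : ((1/2 : ℝ) * 0 + (1 - 1/2) * 0, (1/2 : ℝ) * (b/4) + (1 - 1/2) * (2*w))
          = ((0 : ℝ), w + b/8) := by
        simp only [Prod.mk.injEq]; exact ⟨by ring, by ring⟩
      rw [eM2] at hM2
      have hmid : R (mix (1/2 : ℝ) (by norm_num) (by norm_num)
            (delta ((0 : ℝ), (0 : ℝ))) (delta ((0 : ℝ), 2*w)))
          (mix (1/2 : ℝ) (by norm_num) (by norm_num)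
            (delta ((0 : ℝ), b/4)) (delta ((0 : ℝ), 2*w))) :=
        (hInd (delta ((0 : ℝ), (0 : ℝ))) (delta ((0 : ℝ), b/4)) (delta ((0 : ℝ), 2*w))
          (1/2) (by norm_num) (by norm_num)).1 hOb4
      exact htrans (htrans hM1.2 hmid) hM2.1
    have c1 := step (-b/2)
    have c2 := step (-b/2 + b/8)
    have c3 := step (-b/2 + b/8 + b/8)
    have c4 := step (-b/2 + b/8 + b/8 + b/8)
    have hfin : R (delta ((0 : ℝ), -b/2)) (delta ((0 : ℝ), -b/2 + b/8 + b/8 + b/8 + b/8)) :=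
      htrans (htrans (htrans c1 c2) c3) c4
    have eend : ((0 : ℝ), -b/2 + b/8 + b/8 + b/8 + b/8) = ((0 : ℝ), (0 : ℝ)) := by
      have hz : (-b/2 + b/8 + b/8 + b/8 + b/8 : ℝ) = 0 := by ring
      rw [hz]
    rw [eend] at hfin
    exact hA.1 (htrans (hP a (-b/2) 0 (-b/2) ha.le le_rfl) hfin)
  · -- Negative Dominance on t ≻ δ(0,0)
    obtain ⟨o, ho, o', ho', hst⟩ := hND _ _ ⟨htO, hOt⟩
    have ho'' : o' = ((0 : ℝ), (0 : ℝ)) := by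
      have hmem : o' ∈ (Finsupp.single ((0 : ℝ), (0 : ℝ)) (1 : ℝ)).support := ho'
      exact Finset.mem_singleton.mp (Finsupp.support_single_subset hmem)
    rw [mix_delta_val] at ho
    rcases Finset.mem_union.mp (Finsupp.support_add ho) with h | h
    · have hoe : o = (a, -b/2) := Finset.mem_singleton.mp (Finsupp.support_single_subset h)
      rw [hoe, ho''] at hst
      exact hA.1 hst.1
    · have hoe : o = (-a/2, b) := Finset.mem_singleton.mp (Finsupp.support_single_subset h)
      rw [hoe, ho''] at hst
      exact hB.1 hst.1

end
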